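/- arXiv:2201.06236 — 5 statements merged into one kernel-verified Lean document; each statement's English description precedes it below -/
import Mathlib

section
/- The Chen–Barg code C̄ is MDS: for every subset S ⊆ {0, …, n−1} with |S| = k, the F-linear restriction map from C̄ to (F^{s^n})^S sending a codeword c = (c_{i,a}) to its tuple of node contents ((c_{i,a})_{a ∈ {0,…,s−1}^n})_{i ∈ S} is a bijection; in particular any k node contents determine the whole codeword and C̄ has dimension k·s^n over F. -/
open Finset

/-- The Chen–Barg code `C̄`: arrays `c = (c_{i,a})` with `i ∈ [0,n)` and
`a ∈ {0,…,s-1}^n` satisfying the parity-check equations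
`∑_i λ_i^t c_{i,a} + ∑_i δ(a_i) ∑_{e=1}^{s-1} μ_e^t c_{i,a(i,e)} = 0`
for all `t ∈ [0,r)` and all `a`. -/
def chenBarg {F : Type*} [Field F] (n r s : ℕ) (lam : Fin n → F) (mu : Fin s → F)
    (c : Fin n → (Fin n → Fin s) → F) : Prop :=
  ∀ t < r, ∀ a : Fin n → Fin s,
    ∑ i, lam i ^ t * c i a
      + ∑ i, (if (a i : ℕ) = 0 then
          ∑ e ∈ univ.filter (fun e : Fin s => (e : ℕ) ≠ 0),
            mu e ^ t * c i (Function.update a i e)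
        else 0) = 0

/-- A homogeneous Vandermonde system has only the zero solution. -/
lemma cb_vandermonde_zero {F : Type*} [Field F] {r : ℕ} (v : Fin r → F)
    (hv : Function.Injective v) (x : Fin r → F)
    (h : ∀ t : Fin r, ∑ j, v j ^ (t : ℕ) * x j = 0) : x = 0 := by
  have hd : (Matrix.vandermonde v).transpose.det ≠ 0 := by
    rw [Matrix.det_transpose, Matrix.det_vandermonde_ne_zero_iff]
    exact hv
  apply Matrix.eq_zero_of_mulVec_eq_zero hd
  funext t
  simpa [Matrix.mulVec, Matrix.vandermonde, dotProduct] using h t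

/-- The parity-check map, as a linear map. -/
def cbCheckMap {F : Type*} [Field F] (n r s : ℕ) (lam : Fin n → F) (mu : Fin s → F) :
    (Fin n → (Fin n → Fin s) → F) →ₗ[F] (Fin r → (Fin n → Fin s) → F) where
  toFun c := fun t a =>
    ∑ i, lam i ^ (t : ℕ) * c i a
      + ∑ i, (if (a i : ℕ) = 0 then
          ∑ e ∈ univ.filter (fun e : Fin s => (e : ℕ) ≠ 0),
            mu e ^ (t : ℕ) * c i (Function.update a i e)
        else 0)
  map_add' c c' := by
    funext t a
    simp only [Pi.add_apply, mul_add, ← Finset.sum_filter, Finset.sum_add_distrib]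
    abel
  map_smul' m c := by
    funext t a
    simp only [Pi.smul_apply, smul_eq_mul, RingHom.id_apply, ← Finset.sum_filter,
      mul_add, Finset.mul_sum, mul_left_comm]

lemma chenBarg_iff_checkMap {F : Type*} [Field F] (n r s : ℕ) (lam : Fin n → F)
    (mu : Fin s → F) (c : Fin n → (Fin n → Fin s) → F) :
    chenBarg n r s lam mu c ↔ cbCheckMap n r s lam mu c = 0 := by
  constructor
  · intro h
    funext t a
    simpa [cbCheckMap] using h (t : ℕ) t.isLt a
  · intro h t ht a
    have := congrFun (congrFun h ⟨t, ht⟩) a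
    simpa [cbCheckMap] using this

/-- Key vanishing lemma: a codeword whose node contents vanish on a set `S`
with complement of size `r` vanishes identically. -/
lemma chenBarg_vanish {F : Type*} [Field F] {n r s : ℕ}
    (lam : Fin n → F) (mu : Fin s → F) (hlam : Function.Injective lam)
    (S : Finset (Fin n)) (hcard : Sᶜ.card = r)
    (c : Fin n → (Fin n → Fin s) → F) (hc : chenBarg n r s lam mu c)
    (hS : ∀ i ∈ S, ∀ a, c i a = 0) :
    ∀ (a : Fin n → Fin s) (i : Fin n), c i a = 0 := by
  suffices H : ∀ m (a : Fin n → Fin s),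
      (Sᶜ.filter fun j => (a j : ℕ) = 0).card = m → ∀ i, c i a = 0 by
    intro a i; exact H _ a rfl i
  intro m
  induction m using Nat.strong_induction_on with
  | _ m ih =>
    intro a ha i
    by_cases hiS : i ∈ S
    · exact hS i hiS a
    -- the "auxiliary" entries appearing in the check equations vanish
    have hterm : ∀ j : Fin n, (a j : ℕ) = 0 → ∀ e : Fin s, (e : ℕ) ≠ 0 →
        c j (Function.update a j e) = 0 := by
      intro j hj e he
      by_cases hjS : j ∈ S
      · exact hS j hjS _
      · have hj_mem : j ∈ Sᶜ.filter (fun j' => (a j' : ℕ) = 0) := by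
          simp [Finset.mem_compl, hjS, hj]
        have hfil : Sᶜ.filter (fun j' => ((Function.update a j e j' : Fin s) : ℕ) = 0)
            = (Sᶜ.filter fun j' => (a j' : ℕ) = 0).erase j := by
          ext j'
          simp only [Finset.mem_filter, Finset.mem_erase, Function.update_apply]
          by_cases hj' : j' = j
          · subst hj'; simp [he]
          · simp [hj']
        have hmpos : 0 < m := ha ▸ Finset.card_pos.mpr ⟨j, hj_mem⟩
        have hcard' : (Sᶜ.filter fun j' =>
            ((Function.update a j e j' : Fin s) : ℕ) = 0).card = m - 1 := by
          rw [hfil, Finset.card_erase_of_mem hj_mem, ha]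
        exact ih (m - 1) (by omega) _ hcard' j
    -- the reduced Vandermonde system
    have hcompl : ∀ t : Fin r, ∑ j ∈ Sᶜ, lam j ^ (t : ℕ) * c j a = 0 := by
      intro t
      have h0 := hc (t : ℕ) t.isLt a
      have hzero : (∑ i', (if ((a i' : ℕ) = 0) then
          ∑ e ∈ univ.filter (fun e : Fin s => (e : ℕ) ≠ 0),
            mu e ^ (t : ℕ) * c i' (Function.update a i' e) else 0)) = 0 := by
        refine Finset.sum_eq_zero fun j _ => ?_
        split_ifs with hj
        · refine Finset.sum_eq_zero fun e hee => ?_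
          rw [hterm j hj e (by simpa using hee), mul_zero]
        · rfl
      rw [hzero, add_zero] at h0
      have hsplit := Finset.sum_add_sum_compl S (fun i => lam i ^ (t : ℕ) * c i a)
      have hSzero : ∑ i ∈ S, lam i ^ (t : ℕ) * c i a = 0 :=
        Finset.sum_eq_zero fun i hi => by rw [hS i hi a, mul_zero]
      rw [hSzero, zero_add, h0] at hsplit
      exact hsplit
    -- reindex by Fin r and apply Vandermonde
    have ee : {x // x ∈ Sᶜ} ≃ Fin r := Finset.equivFinOfCardEq hcard
    set v : Fin r → F := fun jj => lam ((ee.symm jj) : Fin n) with hv_def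
    set x : Fin r → F := fun jj => c ((ee.symm jj) : Fin n) a with hx_def
    have hvinj : Function.Injective v := by
      intro j1 j2 h
      have := hlam h
      have := Subtype.coe_injective this
      exact ee.symm.injective this
    have hx0 : x = 0 := by
      apply cb_vandermonde_zero v hvinj x
      intro t
      have hre : ∑ jj : Fin r, v jj ^ (t : ℕ) * x jj
          = ∑ j ∈ Sᶜ, lam j ^ (t : ℕ) * c j a := by
        rw [← Finset.sum_coe_sort Sᶜ (fun j => lam j ^ (t : ℕ) * c j a)]
        exact Fintype.sum_equiv ee.symm _ _ (fun jj => rfl)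
      rw [hre]
      exact hcompl t
    have hiC : i ∈ Sᶜ := Finset.mem_compl.mpr hiS
    have := congrFun hx0 (ee ⟨i, hiC⟩)
    simpa [hx_def] using this

private lemma cb_omega_helper (A B P Q : ℕ) (h : A + B = P + Q) (h2 : A ≤ Q) : P ≤ B := by
  omega

/-- The Chen–Barg code is MDS: for every `k`-subset `S` of the node indices,
the restriction map sending a codeword to its tuple of node contents on `S`
is a bijection. -/
theorem chenBarg_is_MDS {F : Type*} [Field F] [Fintype F]
    (n k d r s : ℕ) (hn : 0 < n) (hk0 : 0 < k) (hr0 : 0 < r)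
    (hnk : n = k + r) (hkd : k < d) (hdn : d ≤ n - 1)
    (hs : s = d - k + 1)
    (lam : Fin n → F) (mu : Fin s → F)
    (hlam : Function.Injective lam)
    (hmu : ∀ e e' : Fin s, (e : ℕ) ≠ 0 → (e' : ℕ) ≠ 0 → mu e = mu e' → e = e')
    (hlammu : ∀ (i : Fin n) (e : Fin s), (e : ℕ) ≠ 0 → lam i ≠ mu e)
    (S : Finset (Fin n)) (hS : S.card = k) :
    Function.Bijective
      (fun c : {c : Fin n → (Fin n → Fin s) → F // chenBarg n r s lam mu c} =>
        fun i : S => c.1 i.1) := by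
  have hScompl : Sᶜ.card = r := by
    rw [Finset.card_compl, hS, Fintype.card_fin]; omega
  set Φ := cbCheckMap n r s lam mu with hΦ
  have hker : ∀ c, chenBarg n r s lam mu c ↔ Φ c = 0 :=
    fun c => chenBarg_iff_checkMap n r s lam mu c
  -- "vanish on S implies zero" for kernel elements
  have hvan0 : ∀ c : Fin n → (Fin n → Fin s) → F, Φ c = 0 →
      (∀ i ∈ S, ∀ a, c i a = 0) → c = 0 := by
    intro c hc hcS
    funext i a
    exact chenBarg_vanish lam mu hlam S hScompl c ((hker c).mpr hc) hcS a i
  constructor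
  · -- injectivity
    intro c c' hcc'
    apply Subtype.ext
    have hd : Φ (c.1 - c'.1) = 0 := by
      rw [map_sub, (hker _).mp c.2, (hker _).mp c'.2, sub_zero]
    have hz : c.1 - c'.1 = 0 := by
      apply hvan0 _ hd
      intro i hi a
      have := congrFun (congrFun hcc' ⟨i, hi⟩) a
      simpa [sub_eq_zero] using this
    exact sub_eq_zero.mp hz
  · -- surjectivity via dimension count
    intro u
    let π : ↥(LinearMap.ker Φ) →ₗ[F] ({x // x ∈ S} → (Fin n → Fin s) → F) :=
      (LinearMap.pi fun i : {x // x ∈ S} =>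
        LinearMap.proj (R := F) (φ := fun _ : Fin n => (Fin n → Fin s) → F) i.1).comp
        (LinearMap.ker Φ).subtype
    have hπinj : Function.Injective π := by
      intro c c' h
      apply Subtype.ext
      have hd : Φ (c.1 - c'.1) = 0 := by
        rw [map_sub, c.2, c'.2, sub_zero]
      have hz : c.1 - c'.1 = 0 := by
        apply hvan0 _ hd
        intro i hi a
        have := congrFun (congrFun h ⟨i, hi⟩) a
        simpa [π, sub_eq_zero] using this
      exact sub_eq_zero.mp hz
    set N := Fintype.card (Fin n → Fin s) with hN
    have hMfin : Module.finrank F ((Fin n → Fin s) → F) = N := Module.finrank_pi F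
    have hV : Module.finrank F (Fin n → (Fin n → Fin s) → F) = n * N := by
      rw [Module.finrank_pi_fintype]
      simp [hMfin, Finset.sum_const, Fintype.card_fin, mul_comm]
    have hW : Module.finrank F (Fin r → (Fin n → Fin s) → F) = r * N := by
      rw [Module.finrank_pi_fintype]
      simp [hMfin, Finset.sum_const, Fintype.card_fin, mul_comm]
    have hU : Module.finrank F ({x // x ∈ S} → (Fin n → Fin s) → F) = k * N := by
      rw [Module.finrank_pi_fintype]
      simp [hMfin, Finset.sum_const, Fintype.card_coe, hS, mul_comm]
    have hrank := LinearMap.finrank_range_add_finrank_ker Φ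
    have hrange_le : Module.finrank F ↥(LinearMap.range Φ) ≤ r * N := by
      rw [← hW]; exact Submodule.finrank_le _
    rw [hV] at hrank
    have hnN : n * N = k * N + r * N := by rw [hnk, add_mul]
    rw [hnN] at hrank
    have hker_ge : k * N ≤ Module.finrank F ↥(LinearMap.ker Φ) :=
      cb_omega_helper _ _ _ _ hrank hrange_le
    have hker_le : Module.finrank F ↥(LinearMap.ker Φ) ≤ k * N := by
      rw [← hU]; exact LinearMap.finrank_le_finrank_of_injective hπinj
    have hker_eq : Module.finrank F ↥(LinearMap.ker Φ) = k * N :=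
      le_antisymm hker_le hker_ge
    have hπsurj : Function.Surjective π := by
      rw [← LinearMap.range_eq_top]
      apply Submodule.eq_top_of_finrank_eq
      rw [LinearMap.finrank_range_of_inj hπinj, hker_eq, hU]
    obtain ⟨c, hc⟩ := hπsurj u
    refine ⟨⟨c.1, (hker _).mpr c.2⟩, ?_⟩
    exact hc
end

section
/- The code C of Construction 1 is MDS: for every subset S ⊆ {0, …, n−1} with |S| = k, the F-linear restriction map from C to (F^{(d−k+h)·s^n})^S sending a codeword c = (c_{i,b,a}) to ((c_{i,b,a})_{b,a})_{i ∈ S} is a bijection; in particular any k node contents determine the whole codeword and C has dimension k·N over F. -/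
/-! Restriction to `S` is injective on `C`. If a codeword vanishes on `S`, the parity checks at `a`
involve, besides `c_{i,b,a}` for the `r` nodes `i ∉ S`, only the values at the neighbours `a(j,e)`
with `j ∉ S`, `a_j = 0`, `e ≠ 0`, and these have one zero coordinate outside `S` fewer than `a`.
By induction on that number the neighbour terms vanish, and what is left is a Vandermonde system
in the distinct `λ_i`, `i ∉ S`, so `c_{i,b,a} = 0`. Since `C` is cut out by `r·(d-k+h)·s^n`
linear equations in a space of dimension `n·(d-k+h)·s^n`, its dimension is at least
`k·(d-k+h)·s^n`, that of the target, so the injective restriction map is bijective. -/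

open Finset

/-- The code `C` of Construction 1: arrays `c = (c_{i,b,a})` with `i ∈ [0,n)`,
`b` ranging over a `B`-element index set (`B = d-k+h`, `Fin B` standing for
`{1,…,d-k+h}`), and `a ∈ {0,…,s-1}^n`, satisfying the parity-check equations
`∑_i λ_i^t c_{i,b,a} + ∑_i δ(a_i) ∑_{e=1}^{s-1} μ_e^t c_{i,b,a(i,e)} = 0`
for all `t ∈ [0,r)`, all `b`, and all `a`. -/
def codeC {F : Type*} [Field F] (n r s B : ℕ) (lam : Fin n → F) (mu : Fin s → F)
    (c : Fin n → Fin B → (Fin n → Fin s) → F) : Prop :=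
  ∀ t < r, ∀ b : Fin B, ∀ a : Fin n → Fin s,
    ∑ i, lam i ^ t * c i b a
      + ∑ i, (if (a i : ℕ) = 0 then
          ∑ e ∈ univ.filter (fun e : Fin s => (e : ℕ) ≠ 0),
            mu e ^ t * c i b (Function.update a i e)
        else 0) = 0

namespace Finset

theorem eq_zero_of_forall_sum_pow_mul_eq_zero {R ι : Type*} [CommRing R] [IsDomain R]
    {T : Finset ι} {f v : ι → R} (hf : Set.InjOn f T)
    (hfv : ∀ t < #T, ∑ i ∈ T, f i ^ t * v i = 0) : ∀ i ∈ T, v i = 0 := by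
  let e : Fin #T ≃ T := T.equivFin.symm
  have hv : (fun j => v (e j)) = 0 := by
    refine Matrix.eq_zero_of_forall_pow_sum_mul_pow_eq_zero (f := fun j => f (e j))
      (fun j j' h => e.injective (Subtype.ext (hf (e j).2 (e j').2 h))) fun t => ?_
    rw [← hfv t t.2, ← T.sum_coe_sort, ← e.sum_comp]
    simp only [mul_comm]
  intro i hi
  simpa [e] using congrFun hv (e.symm ⟨i, hi⟩)

end Finset

theorem LinearMap.sub_le_finrank_ker {K V W : Type*} [DivisionRing K] [AddCommGroup V]
    [Module K V] [AddCommGroup W] [Module K W] [FiniteDimensional K V] [FiniteDimensional K W]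
    (f : V →ₗ[K] W) : Module.finrank K V - Module.finrank K W ≤ Module.finrank K (ker f) := by
  have := f.finrank_range_add_finrank_ker
  have := (range f).finrank_le
  omega

theorem Module.finrank_fun_eq_card_mul (K : Type*) {M ι : Type*} [Field K] [AddCommGroup M]
    [Module K M] [FiniteDimensional K M] [Fintype ι] :
    Module.finrank K (ι → M) = Fintype.card ι * Module.finrank K M := by
  simp [Module.finrank_pi_fintype]

theorem Submodule.bijective_restrict_of_finrank_le {K ι M : Type*} [Field K] [Fintype ι]
    [AddCommGroup M] [Module K M] [FiniteDimensional K M] (C : Submodule K (ι → M))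
    (S : Finset ι) (hdim : #S * Module.finrank K M ≤ Module.finrank K C)
    (hinj : ∀ c ∈ C, (∀ i ∈ S, c i = 0) → c = 0) :
    Function.Bijective fun c : C => fun i : S => c.1 i := by
  let res : C →ₗ[K] (S → M) := (LinearMap.funLeft K M Subtype.val).comp C.subtype
  have hres : Function.Injective res := by
    refine (injective_iff_map_eq_zero res).2 fun c hc => Subtype.ext (hinj c c.2 fun i hi => ?_)
    exact congrFun hc ⟨i, hi⟩
  have hdim' : Module.finrank K C = Module.finrank K (S → M) := by
    refine le_antisymm (LinearMap.finrank_le_finrank_of_injective hres) ?_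
    simpa [Module.finrank_fun_eq_card_mul] using hdim
  exact ⟨hres, (LinearMap.injective_iff_surjective_of_finrank_eq_finrank hdim').1 hres⟩

section ConstructionOne

variable {F : Type*} [Field F] {n r s B : ℕ} {lam : Fin n → F} {mu : Fin s → F}

variable (n r s B lam mu) in
def parityCheck :
    (Fin n → Fin B → (Fin n → Fin s) → F) →ₗ[F]
      (Fin r → Fin B → (Fin n → Fin s) → F) where
  toFun c t b a :=
    ∑ i, lam i ^ (t : ℕ) * c i b a
      + ∑ i, (if (a i : ℕ) = 0 then
          ∑ e ∈ univ.filter (fun e : Fin s => (e : ℕ) ≠ 0),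
            mu e ^ (t : ℕ) * c i b (Function.update a i e)
        else 0)
  map_add' c c' := by
    funext t b a
    simp only [Pi.add_apply, mul_add, sum_add_distrib, ite_add_zero]
    abel
  map_smul' x c := by
    funext t b a
    simp only [Pi.smul_apply, RingHom.id_apply, smul_add, smul_sum, smul_ite, smul_zero,
      mul_smul_comm]

theorem codeC_iff_parityCheck_eq_zero {c : Fin n → Fin B → (Fin n → Fin s) → F} :
    codeC n r s B lam mu c ↔ parityCheck n r s B lam mu c = 0 :=
  ⟨fun hc => funext fun t => funext fun b => funext fun a => hc t t.2 b a,
    fun hc t ht b a => congrFun (congrFun (congrFun hc ⟨t, ht⟩) b) a⟩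

theorem codeC.sum_compl_eq_zero {c : Fin n → Fin B → (Fin n → Fin s) → F}
    (hc : codeC n r s B lam mu c) {S : Finset (Fin n)} (hS : ∀ i ∈ S, c i = 0)
    {b : Fin B} {a : Fin n → Fin s}
    (hnbr : ∀ j ∉ S, (a j : ℕ) = 0 → ∀ e : Fin s, (e : ℕ) ≠ 0 →
      c j b (Function.update a j e) = 0) :
    ∀ t < r, ∑ i ∈ Sᶜ, lam i ^ t * c i b a = 0 := by
  intro t ht
  have hδ : ∑ i, (if (a i : ℕ) = 0 then
      ∑ e ∈ univ.filter (fun e : Fin s => (e : ℕ) ≠ 0),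
        mu e ^ t * c i b (Function.update a i e) else 0) = 0 := by
    refine sum_eq_zero fun i _ => ite_eq_right_iff.2 fun hai => sum_eq_zero fun e he => ?_
    by_cases hi : i ∈ S
    · simp [hS i hi]
    · simp [hnbr i hi hai e (mem_filter.1 he).2]
  have hsplit := sum_add_sum_compl S fun i => lam i ^ t * c i b a
  rw [sum_eq_zero fun i hi => by simp [hS i hi], zero_add] at hsplit
  simpa [hδ, hsplit] using hc t ht b a

theorem card_filter_update_lt {ι : Type*} [DecidableEq ι] {T : Finset ι} {a : ι → Fin s}
    {j : ι} (hj : j ∈ T) (haj : (a j : ℕ) = 0) {e : Fin s} (he : (e : ℕ) ≠ 0) :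
    #(T.filter fun i => (Function.update a j e i : ℕ) = 0)
      < #(T.filter fun i => (a i : ℕ) = 0) := by
  refine card_lt_card <|
    (ssubset_iff_of_subset fun i => ?_).2 ⟨j, by simp [hj, haj], by simp [he]⟩
  by_cases hij : i = j
  · simp [hij, he]
  · simp [hij]

theorem codeC.apply_eq_zero_of_eq_zero_on (hlam : Function.Injective lam)
    {c : Fin n → Fin B → (Fin n → Fin s) → F} (hc : codeC n r s B lam mu c)
    {S : Finset (Fin n)} (hSr : #Sᶜ ≤ r) (hS : ∀ i ∈ S, c i = 0) (b : Fin B)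
    (a : Fin n → Fin s) (i : Fin n) : c i b a = 0 := by
  by_cases hi : i ∈ S
  · simp [hS i hi]
  refine eq_zero_of_forall_sum_pow_mul_eq_zero hlam.injOn
    (fun t ht => hc.sum_compl_eq_zero hS (fun j hj haj e he => ?_) t (ht.trans_le hSr))
    i (mem_compl.2 hi)
  exact hc.apply_eq_zero_of_eq_zero_on hlam hSr hS b _ j
termination_by #(Sᶜ.filter fun i => (a i : ℕ) = 0)
decreasing_by exact card_filter_update_lt (mem_compl.2 hj) haj he

end ConstructionOne

theorem codeC_is_MDS_general {F : Type*} [Field F]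
    (n k d h r s : ℕ) (hnk : n = k + r)
    (lam : Fin n → F) (mu : Fin s → F)
    (hlam : Function.Injective lam)
    (S : Finset (Fin n)) (hS : S.card = k) :
    Function.Bijective
      (fun c : {c : Fin n → Fin (d - k + h) → (Fin n → Fin s) → F //
          codeC n r s (d - k + h) lam mu c} =>
        fun i : S => c.1 i.1) := by
  set ψ := parityCheck n r s (d - k + h) lam mu
  have hSr : #Sᶜ ≤ r := by simp [card_compl, hS, hnk]
  have hdim : #S * Module.finrank F (Fin (d - k + h) → (Fin n → Fin s) → F)
      ≤ Module.finrank F (LinearMap.ker ψ) := by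
    have hker := ψ.sub_le_finrank_ker
    rw [Module.finrank_fun_eq_card_mul F (ι := Fin n),
      Module.finrank_fun_eq_card_mul F (ι := Fin r), Fintype.card_fin, Fintype.card_fin,
      ← Nat.sub_mul] at hker
    rwa [show #S = n - r by omega]
  have hbij := (LinearMap.ker ψ).bijective_restrict_of_finrank_le S hdim fun c hc hcS => by
    funext i b a
    exact (codeC_iff_parityCheck_eq_zero.2 (LinearMap.mem_ker.1 hc)).apply_eq_zero_of_eq_zero_on
      hlam hSr hcS b a i
  exact hbij.comp (Equiv.subtypeEquivRight fun c => codeC_iff_parityCheck_eq_zero).bijective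

/-- The code `C` of Construction 1 is MDS: for every `k`-subset `S` of the node
indices, the restriction map sending a codeword to its tuple of node contents on
`S` is a bijection. -/
theorem codeC_is_MDS {F : Type*} [Field F] [Fintype F]
    (n k d h r s N : ℕ) (hn : 0 < n) (hk0 : 0 < k) (hr0 : 0 < r) (hh : 1 ≤ h)
    (hnk : n = k + r) (hkd : k < d) (hdn : d + h ≤ n)
    (hs : s = d - k + 1) (hN : N = (d - k + h) * s ^ n)
    (lam : Fin n → F) (mu : Fin s → F)
    (hlam : Function.Injective lam)
    (hmu : ∀ e e' : Fin s, (e : ℕ) ≠ 0 → (e' : ℕ) ≠ 0 → mu e = mu e' → e = e')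
    (hlammu : ∀ (i : Fin n) (e : Fin s), (e : ℕ) ≠ 0 → lam i ≠ mu e)
    (S : Finset (Fin n)) (hS : S.card = k) :
    Function.Bijective
      (fun c : {c : Fin n → Fin (d - k + h) → (Fin n → Fin s) → F //
          codeC n r s (d - k + h) lam mu c} =>
        fun i : S => c.1 i.1) :=
  codeC_is_MDS_general n k d h r s hnk lam mu hlam S hS
end

section
/- Vectors in the kernel of a Vandermonde parity-check matrix are determined by any complementary set of coordinates: if y, y' ∈ K and there is a set J ⊆ {0, …, m−1} with |J| = m − r such that y_j = y'_j for all j ∈ J, then y = y'. -/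
open Finset

/-- Vectors in the kernel of a Vandermonde parity-check matrix (with `r` rows
and `m` columns built on pairwise distinct evaluation points `x_0,…,x_{m-1}`)
are determined by any `m - r` of their coordinates. -/
theorem vandermonde_kernel_determined {F : Type*} [Field F]
    (m r : ℕ) (hr0 : 0 < r) (hrm : r ≤ m)
    (x : Fin m → F) (hx : Function.Injective x)
    (y y' : Fin m → F)
    (hy : ∀ t < r, ∑ j, x j ^ t * y j = 0)
    (hy' : ∀ t < r, ∑ j, x j ^ t * y' j = 0)
    (J : Finset (Fin m)) (hJ : J.card = m - r)
    (hagree : ∀ j ∈ J, y j = y' j) :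
    y = y' := by
  set z : Fin m → F := fun j => y j - y' j with hzdef
  have hz : ∀ t < r, ∑ j, x j ^ t * z j = 0 := by
    intro t ht
    have : ∑ j, x j ^ t * z j = (∑ j, x j ^ t * y j) - ∑ j, x j ^ t * y' j := by
      rw [← Finset.sum_sub_distrib]
      congr 1; ext j; ring
    rw [this, hy t ht, hy' t ht, sub_zero]
  have hcompl : Jᶜ.card = r := by
    rw [Finset.card_compl, Fintype.card_fin, hJ, Nat.sub_sub_self hrm]
  set e := Jᶜ.equivFinOfCardEq hcompl with he
  set u : Fin r → F := fun i => x (e.symm i) with hu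
  set w : Fin r → F := fun i => z (e.symm i) with hw
  have hui : Function.Injective u := by
    intro a b hab
    exact e.symm.injective (Subtype.coe_injective (hx hab))
  have hsum : ∀ i : Fin r, ∑ j : Fin r, w j * u j ^ (i : ℕ) = 0 := by
    intro i
    have hzJ : ∀ j ∈ J, x j ^ (i : ℕ) * z j = 0 := by
      intro j hj
      simp [hzdef, hagree j hj]
    have h1 : ∑ j ∈ Jᶜ, x j ^ (i : ℕ) * z j = 0 := by
      have htot := hz i i.2
      rwa [← Finset.sum_add_sum_compl J, Finset.sum_eq_zero hzJ, zero_add] at htot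
    calc ∑ j : Fin r, w j * u j ^ (i : ℕ)
        = ∑ j : Fin r, x (e.symm j) ^ (i : ℕ) * z (e.symm j) := by
          congr 1; ext j; rw [mul_comm]
      _ = ∑ j ∈ Jᶜ, x j ^ (i : ℕ) * z j := by
          rw [← Finset.sum_attach Jᶜ (fun j => x j ^ (i : ℕ) * z j)]
          exact Equiv.sum_comp e.symm (fun j : {a // a ∈ Jᶜ} => x (j : Fin m) ^ (i : ℕ) * z (j : Fin m))
      _ = 0 := h1
  have hw0 : w = 0 := Matrix.eq_zero_of_forall_pow_sum_mul_pow_eq_zero hui hsum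
  funext j
  by_cases hj : j ∈ J
  · exact hagree j hj
  · have hj' : j ∈ Jᶜ := Finset.mem_compl.mpr hj
    have : w (e ⟨j, hj'⟩) = 0 := by rw [hw0]; rfl
    have hzj : z j = 0 := by simpa [hw] using this
    simp only [hzdef] at hzj
    exact sub_eq_zero.mp hzj
end

section
/- (Access count of the repair scheme, Theorem 7) Assume h ≥ 2 and let i_1, …, i_h ∈ {0, …, n−1} be pairwise distinct. The set A = { (b, a) : b ∈ {d−k+1, …, d−k+h}, a ∈ {0, …, s−1}^n } ∪ { (b, a) : b ∈ {1, …, d−k}, a ∈ V_{i_1} ∪ ⋯ ∪ V_{i_h} } of indices of symbols accessed at each helper node has cardinality h·s^n + (d−k)·( s^n − s^{n−h}·(s−1)^h ), and this number equals N·( 1 − ((d−k)/(d−k+h))·( 1 − 1/(d−k+1) )^h ) where N = (d−k+h)·s^n. -/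
/-!
A helper node reads all of its `h` layers `d-k+1, …, d-k+h`, and in each of the other `d-k`
layers the symbols indexed by `V_{i_1} ∪ ⋯ ∪ V_{i_h}`. The complement of that union consists of
the vectors whose `h` distinct coordinates `i_j` are all nonzero, so it has `s^(n-h)·(s-1)^h`
elements. The closed form then follows from `(s-1)/s = 1 - 1/(d-k+1)`.
-/

open Finset

/-- The set of indices `(b, a)` of symbols accessed at each helper node during
the proposed repair scheme: all symbols in layers `b ∈ {d-k+1,…,d-k+h}`,
together with the symbols indexed by `a ∈ V_{i_1} ∪ ⋯ ∪ V_{i_h}` in layers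
`b ∈ {1,…,d-k}`, where `V_i = {a ∈ {0,…,s-1}^n : a_i = 0}` and the failed
nodes are `idx 0, …, idx (h-1)`. -/
def accessSet (n k d h s : ℕ) (idx : Fin h → Fin n) :
    Finset (ℕ × (Fin n → Fin s)) :=
  (Finset.Icc (d - k + 1) (d - k + h)) ×ˢ (Finset.univ : Finset (Fin n → Fin s))
    ∪ (Finset.Icc 1 (d - k)) ×ˢ
        (Finset.univ.filter (fun a : Fin n → Fin s => ∃ l : Fin h, (a (idx l) : ℕ) = 0))

section Counting

variable {ι α : Type*} [Fintype ι] [DecidableEq ι] [Fintype α] [DecidableEq α]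

theorem card_filter_forall_ne (S : Finset ι) (c : α) :
    #{a : ι → α | ∀ i ∈ S, a i ≠ c}
      = Fintype.card α ^ (Fintype.card ι - #S) * (Fintype.card α - 1) ^ #S := by
  have hpi : ({a : ι → α | ∀ i ∈ S, a i ≠ c} : Finset (ι → α))
      = Fintype.piFinset fun i => if i ∈ S then univ.erase c else univ := by
    ext a
    simp only [mem_filter, mem_univ, true_and, Fintype.mem_piFinset]
    refine forall_congr' fun i => ?_
    split_ifs with hi <;> simp [hi]
  simp only [hpi, Fintype.card_piFinset, apply_ite card, card_erase_of_mem (mem_univ c), card_univ]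
  rw [prod_ite, prod_const, prod_const, filter_mem_eq_inter, univ_inter, filter_not,
    filter_mem_eq_inter, univ_inter, card_sdiff_of_subset (subset_univ S), card_univ, mul_comm]

theorem card_filter_exists_eq (S : Finset ι) (c : α)
    [DecidablePred fun a : ι → α => ∃ i ∈ S, a i = c] :
    #{a : ι → α | ∃ i ∈ S, a i = c}
      = Fintype.card α ^ Fintype.card ι
        - Fintype.card α ^ (Fintype.card ι - #S) * (Fintype.card α - 1) ^ #S := by
  rw [← card_filter_forall_ne S c, ← Fintype.card_fun, ← card_univ,
    ← card_filter_add_card_filter_not (s := univ) (fun a : ι → α => ∃ i ∈ S, a i = c)]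
  simp

end Counting

theorem card_accessSet (n k d h m : ℕ) {idx : Fin h → Fin n} (hidx : Function.Injective idx) :
    #(accessSet n k d h (m + 1) idx)
      = h * (m + 1) ^ n + (d - k) * ((m + 1) ^ n - (m + 1) ^ (n - h) * m ^ h) := by
  have hV : #{a : Fin n → Fin (m + 1) | ∃ l, (a (idx l) : ℕ) = 0}
      = (m + 1) ^ n - (m + 1) ^ (n - h) * m ^ h := by
    have hS : univ.filter (fun a : Fin n → Fin (m + 1) => ∃ l, (a (idx l) : ℕ) = 0)
        = univ.filter fun a => ∃ i ∈ univ.image idx, a i = 0 := by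
      ext a
      simp [Fin.val_eq_zero_iff]
    rw [hS, card_filter_exists_eq, card_image_of_injective _ hidx]
    simp
  have hdisj : Disjoint (Icc (d - k + 1) (d - k + h)) (Icc 1 (d - k)) := by
    rw [disjoint_left]
    intro b hb hb'
    simp only [mem_Icc] at hb hb'
    omega
  rw [accessSet, card_union_of_disjoint (disjoint_product.mpr (Or.inl hdisj)), card_product,
    card_product, hV]
  simp

theorem cast_accessCount_eq_mul_one_sub (m h n : ℕ) (hhn : h ≤ n) :
    ((h * (m + 1) ^ n + m * ((m + 1) ^ n - (m + 1) ^ (n - h) * m ^ h) : ℕ) : ℝ)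
      = (((m + h) * (m + 1) ^ n : ℕ) : ℝ)
        * (1 - (m : ℝ) / ((m + h : ℕ) : ℝ) * (1 - 1 / ((m + 1 : ℕ) : ℝ)) ^ h) := by
  have hle : (m + 1) ^ (n - h) * m ^ h ≤ (m + 1) ^ n := by
    calc (m + 1) ^ (n - h) * m ^ h ≤ (m + 1) ^ (n - h) * (m + 1) ^ h := by gcongr; omega
      _ = (m + 1) ^ n := by rw [← pow_add, Nat.sub_add_cancel hhn]
  have hpow : ((m : ℝ) + 1) ^ n = (m + 1) ^ (n - h) * (m + 1) ^ h := by
    rw [← pow_add, Nat.sub_add_cancel hhn]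
  -- for `m = 0` the ratio `m / (m + h)` may be the junk value `0 / 0`
  rcases Nat.eq_zero_or_pos m with rfl | hm
  · simp
  have hfrac : 1 - 1 / ((m : ℝ) + 1) = m / (m + 1) := by field_simp; ring
  push_cast [Nat.cast_sub hle]
  rw [hpow, hfrac, div_pow]
  field_simp
  ring

theorem access_count_general (n k d h s N : ℕ)
    (hs : s = d - k + 1) (hN : N = (d - k + h) * s ^ n)
    (idx : Fin h → Fin n) (hidx : Function.Injective idx) :
    (accessSet n k d h s idx).card
        = h * s ^ n + (d - k) * (s ^ n - s ^ (n - h) * (s - 1) ^ h)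
      ∧ ((accessSet n k d h s idx).card : ℝ)
        = (N : ℝ) * (1 - ((d - k : ℕ) : ℝ) / ((d - k + h : ℕ) : ℝ)
            * (1 - 1 / ((d - k + 1 : ℕ) : ℝ)) ^ h) := by
  subst hs hN
  have hhn : h ≤ n := by simpa using Fintype.card_le_of_injective idx hidx
  have hcard := card_accessSet n k d h (d - k) hidx
  rw [Nat.add_sub_cancel]
  exact ⟨hcard, by rw [hcard]; exact cast_accessCount_eq_mul_one_sub (d - k) h n hhn⟩

/-- Theorem 7 (access count): the number of symbols accessed at each helper
node is `h·s^n + (d-k)·(s^n - s^(n-h)·(s-1)^h)`, which equals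
`N·(1 - ((d-k)/(d-k+h))·(1 - 1/(d-k+1))^h)` where `N = (d-k+h)·s^n`. -/
theorem access_count (n k d h s N : ℕ) (hk0 : 0 < k) (hkd : k < d)
    (hdn : d + h ≤ n) (hh : 2 ≤ h)
    (hs : s = d - k + 1) (hN : N = (d - k + h) * s ^ n)
    (idx : Fin h → Fin n) (hidx : Function.Injective idx) :
    (accessSet n k d h s idx).card
        = h * s ^ n + (d - k) * (s ^ n - s ^ (n - h) * (s - 1) ^ h)
      ∧ ((accessSet n k d h s idx).card : ℝ)
        = (N : ℝ) * (1 - ((d - k : ℕ) : ℝ) / ((d - k + h : ℕ) : ℝ)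
            * (1 - 1 / ((d - k + 1 : ℕ) : ℝ)) ^ h) :=
  access_count_general n k d h s N hs hN idx hidx
end

section
/- (Low access property) For all positive integers m and h, the quantity G(m,h) = 1 − (m/(m+h))·(1 − 1/(m+1))^h is strictly less than 2·h/(m+h), i.e., the amount of data accessed per helper node is strictly less than two times the optimal access amount h·N/(m+h). -/
/-- Low access property: for all positive integers `m` (playing the role of
`d - k`) and `h`, the access ratio `G(m,h) = 1 - (m/(m+h))·(1 - 1/(m+1))^h` is
strictly less than `2·h/(m+h)`, i.e. the amount of data accessed per helper
node is strictly less than two times the optimal access amount `h·N/(m+h)`. -/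
theorem access_ratio_lt_twice_optimal (m h : ℕ) (hm : 1 ≤ m) (hh : 1 ≤ h) :
    1 - (m : ℝ) / ((m : ℝ) + (h : ℝ)) * (1 - 1 / ((m : ℝ) + 1)) ^ h
      < 2 * (h : ℝ) / ((m : ℝ) + (h : ℝ)) := by
  have hm1 : (1:ℝ) ≤ (m:ℝ) := by exact_mod_cast hm
  have hh1 : (1:ℝ) ≤ (h:ℝ) := by exact_mod_cast hh
  have hm0 : (0:ℝ) < (m:ℝ) + 1 := by linarith
  have hs : (0:ℝ) < (m:ℝ) + (h:ℝ) := by linarith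
  have ha : (-2:ℝ) ≤ -(1 / ((m:ℝ) + 1)) := by
    have : 1 / ((m:ℝ) + 1) ≤ 1 := by
      rw [div_le_one hm0]; linarith
    linarith
  have hb := one_add_mul_le_pow ha h
  have hb' : 1 - (h:ℝ) * (1 / ((m:ℝ) + 1)) ≤ (1 - 1 / ((m:ℝ) + 1)) ^ h := by
    have : (1:ℝ) + -(1 / ((m:ℝ) + 1)) = 1 - 1 / ((m:ℝ) + 1) := by ring
    rw [this] at hb
    calc 1 - (h:ℝ) * (1 / ((m:ℝ) + 1)) = 1 + (h:ℕ) * -(1 / ((m:ℝ) + 1)) := by ring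
      _ ≤ _ := hb
  rw [div_mul_eq_mul_div, lt_div_iff₀ hs, sub_mul,
    div_mul_cancel₀ _ (ne_of_gt hs)]
  have key : (m:ℝ) * (1 - (1 - 1 / ((m:ℝ) + 1)) ^ h) < (h:ℝ) := by
    have h1 : (m:ℝ) * (1 - (1 - 1 / ((m:ℝ) + 1)) ^ h)
        ≤ (m:ℝ) * ((h:ℝ) * (1 / ((m:ℝ) + 1))) := by
      apply mul_le_mul_of_nonneg_left _ (by linarith)
      linarith
    have h2 : (m:ℝ) * ((h:ℝ) * (1 / ((m:ℝ) + 1))) < (h:ℝ) := by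
      have he : (m:ℝ) * ((h:ℝ) * (1 / ((m:ℝ) + 1))) = (m:ℝ) * (h:ℝ) / ((m:ℝ) + 1) := by
        ring
      rw [he, div_lt_iff₀ hm0]
      nlinarith
    linarith
  nlinarith [key]
end
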